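/- Let T = αφ + βT₀ with α, β ∈ ℝ, where T₀ := 4e₁₂₇ − 3e₁₃₅ + 3e₁₄₆ + 3e₂₃₆ + 3e₂₄₅ + 4e₃₄₇ + 4e₅₆₇. Then σ(T)² acts as a scalar on span{ψ₁, ψ₂} (i.e. there is λ ∈ ℝ with σ(T)²ψ₁ = λψ₁ and σ(T)²ψ₂ = λψ₂) if and only if T lies in the union of the two lines ℝ·(e₁₂₇ + e₃₄₇ + e₅₆₇) ∪ ℝ·(−e₁₃₅ + e₁₄₆ + e₂₃₆ + e₂₄₅); equivalently, if and only if α = 3β or α = −4β. (This identifies the set Tor_{su(3)} of admissible torsion forms; in particular Tor_{su(3)} ∩ ℝφ = 0 and Tor_{su(3)} ∩ ℝT₀ = 0.) -/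

import Mathlib

/-!
With `ω = e₁₂ + e₃₄ + e₅₆`, `P = ω ∧ e₇ = e₁₂₇ + e₃₄₇ + e₅₆₇` and
`Q = -Re((e₁ + i e₂) ∧ (e₃ + i e₄) ∧ (e₅ + i e₆)) = -e₁₃₅ + e₁₄₆ + e₂₃₆ + e₂₄₅` we have
`φ = P - Q` and `T₀ = 4P + 3Q`, so `T = aP + bQ` with `a = α + 4β`, `b = 3β - α`.
The spinors `ψ₁`, `ψ₂` are common eigenvectors of `σ(P)` and `σ(Q)`, with eigenvalues `(-3, 4)`
and `(-3, -4)`, so `σ(T)²` acts on them by `(4b - 3a)²` and `(4b + 3a)²`. These differ by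
`48ab`, so `σ(T)²` is scalar on `span{ψ₁, ψ₂}` iff `a = 0` or `b = 0`, i.e. iff `T ∈ ℝQ ∪ ℝP`.
-/

open Matrix BigOperators

noncomputable section

abbrev M8 : Type := Matrix (Fin 8) (Fin 8) ℝ

/-- 2-forms on ℝ⁷ -/
abbrev Lam2 : Type := AlternatingMap ℝ (Fin 7 → ℝ) ℝ (Fin 2)

/-- 3-forms on ℝ⁷ -/
abbrev Lam3 : Type := AlternatingMap ℝ (Fin 7 → ℝ) ℝ (Fin 3)

/-- standard basis of ℝ⁷ -/
def u (i : Fin 7) : Fin 7 → ℝ := Pi.single i 1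

/-- standard spinor basis ψ₁,…,ψ₈ (0-indexed) -/
def ψ (k : Fin 8) : Fin 8 → ℝ := Pi.single k 1

/-- E_{ij} : ψ_i ↦ ψ_j, ψ_j ↦ -ψ_i -/
def EE (i j : Fin 8) : M8 := Matrix.single j i 1 - Matrix.single i j 1

/-- Clifford multiplication by e₁,…,e₇ (0-indexed) -/
def e : Fin 7 → M8 :=
  ![EE 0 7 + EE 1 6 - EE 2 5 - EE 3 4,
    -EE 0 6 + EE 1 7 + EE 2 4 - EE 3 5,
    -EE 0 5 + EE 1 4 - EE 2 7 + EE 3 6,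
    -EE 0 4 - EE 1 5 - EE 2 6 - EE 3 7,
    -EE 0 2 - EE 1 3 + EE 4 6 + EE 5 7,
    EE 0 3 - EE 1 2 - EE 4 7 + EE 5 6,
    EE 0 1 - EE 2 3 - EE 4 5 + EE 6 7]

def pick2 (i j : Fin 7) : (Fin 7 → ℝ) →ₗ[ℝ] (Fin 2 → ℝ) :=
  LinearMap.pi fun m => LinearMap.proj (![i, j] m)

def pick3 (i j k : Fin 7) : (Fin 7 → ℝ) →ₗ[ℝ] (Fin 3 → ℝ) :=
  LinearMap.pi fun m => LinearMap.proj (![i, j, k] m)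

/-- the 2-form e_i ∧ e_j -/
def w2 (i j : Fin 7) : Lam2 :=
  (Matrix.detRowAlternating : AlternatingMap ℝ (Fin 2 → ℝ) ℝ (Fin 2)).compLinearMap (pick2 i j)

/-- the 3-form e_i ∧ e_j ∧ e_k -/
def w3 (i j k : Fin 7) : Lam3 :=
  (Matrix.detRowAlternating : AlternatingMap ℝ (Fin 3 → ℝ) ℝ (Fin 3)).compLinearMap (pick3 i j k)

/-- Clifford action of a 2-form -/
def σ2 (ω : Lam2) : M8 :=
  ∑ i : Fin 7, ∑ j : Fin 7, if i < j then ω ![u i, u j] • (e i * e j) else 0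

/-- Clifford action of a 3-form -/
def σ3 (T : Lam3) : M8 :=
  ∑ i : Fin 7, ∑ j : Fin 7, ∑ k : Fin 7,
    if i < j ∧ j < k then T ![u i, u j, u k] • (e i * e j * e k) else 0

/-- the skew-symmetric 7×7 matrix A_ω associated to a 2-form ω -/
def A2 (ω : Lam2) : Matrix (Fin 7) (Fin 7) ℝ :=
  ∑ i : Fin 7, ∑ j : Fin 7,
    if i < j then ω ![u i, u j] •
      (Matrix.single j i (1 : ℝ) - Matrix.single i j 1) else 0

/-- T is ω-invariant: the natural action of the 2-form ω on the 3-form T vanishes -/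
def inv3 (ω : Lam2) (T : Lam3) : Prop :=
  ∀ X Y Z : Fin 7 → ℝ,
    T ![A2 ω *ᵥ X, Y, Z] + T ![X, A2 ω *ᵥ Y, Z] + T ![X, Y, A2 ω *ᵥ Z] = 0

/-- the standard G₂ 3-form φ = e₁₂₇+e₁₃₅−e₁₄₆−e₂₃₆−e₂₄₅+e₃₄₇+e₅₆₇ -/
def φf : Lam3 :=
  w3 0 1 6 + w3 0 2 4 - w3 0 3 5 - w3 1 2 5 - w3 1 3 4 + w3 2 3 6 + w3 4 5 6

/-- T₀ := 4e₁₂₇ − 3e₁₃₅ + 3e₁₄₆ + 3e₂₃₆ + 3e₂₄₅ + 4e₃₄₇ + 4e₅₆₇ -/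
def T0 : Lam3 :=
  (4:ℝ) • w3 0 1 6 - (3:ℝ) • w3 0 2 4 + (3:ℝ) • w3 0 3 5 + (3:ℝ) • w3 1 2 5
    + (3:ℝ) • w3 1 3 4 + (4:ℝ) • w3 2 3 6 + (4:ℝ) • w3 4 5 6

lemma ψ_apply (k l : Fin 8) : ψ k l = if l = k then 1 else 0 := Pi.single_apply _ _ _

lemma ψ_ne_zero (k : Fin 8) : ψ k ≠ 0 := Pi.single_ne_zero_iff.mpr one_ne_zero

lemma EE_mulVec (i j : Fin 8) (v : Fin 8 → ℝ) : EE i j *ᵥ v = v i • ψ j - v j • ψ i := by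
  simp only [EE, sub_mulVec, single_mulVec_eq, one_mul, ψ]

lemma w3_apply_u {i j k a b c : Fin 7} (hij : i < j) (hjk : j < k) (hab : a < b) (hbc : b < c) :
    w3 i j k ![u a, u b, u c] = if a = i ∧ b = j ∧ c = k then 1 else 0 := by
  change Matrix.det (Matrix.of fun m n => ![u a, u b, u c] m (![i, j, k] n)) = _
  split_ifs with h
  · obtain ⟨rfl, rfl, rfl⟩ := h
    convert Matrix.det_one (n := Fin 3) (R := ℝ)
    ext m n
    have hac := hab.trans hbc
    fin_cases m <;> fin_cases n <;>
      simp [u, Pi.single_apply, hab.ne, hbc.ne, hac.ne, hab.ne', hbc.ne', hac.ne']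
  · have hout : (a ≠ i ∧ a ≠ j ∧ a ≠ k) ∨ (b ≠ i ∧ b ≠ j ∧ b ≠ k) ∨ (c ≠ i ∧ c ≠ j ∧ c ≠ k) := by
      omega
    rcases hout with ha | hb | hc
    · exact Matrix.det_eq_zero_of_row_eq_zero 0 fun n => by
        fin_cases n <;> simp [u, Pi.single_apply, ha.1.symm, ha.2.1.symm, ha.2.2.symm]
    · exact Matrix.det_eq_zero_of_row_eq_zero 1 fun n => by
        fin_cases n <;> simp [u, Pi.single_apply, hb.1.symm, hb.2.1.symm, hb.2.2.symm]
    · exact Matrix.det_eq_zero_of_row_eq_zero 2 fun n => by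
        fin_cases n <;> simp [u, Pi.single_apply, hc.1.symm, hc.2.1.symm, hc.2.2.symm]

lemma σ3_add (S T : Lam3) : σ3 (S + T) = σ3 S + σ3 T := by
  simp only [σ3, AlternatingMap.add_apply, add_smul, ite_add_zero, Finset.sum_add_distrib]

lemma σ3_smul (r : ℝ) (T : Lam3) : σ3 (r • T) = r • σ3 T := by
  simp only [σ3, Finset.smul_sum, smul_ite, smul_zero, AlternatingMap.smul_apply, smul_smul]
  rfl

lemma σ3_neg (T : Lam3) : σ3 (-T) = -σ3 T := by
  rw [← neg_one_smul ℝ T, σ3_smul, neg_one_smul]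

lemma σ3_w3 {i j k : Fin 7} (hij : i < j) (hjk : j < k) : σ3 (w3 i j k) = e i * e j * e k := by
  have term : ∀ a b c : Fin 7,
      (if a < b ∧ b < c then w3 i j k ![u a, u b, u c] • (e a * e b * e c) else 0) =
        if a = i ∧ b = j ∧ c = k then e i * e j * e k else 0 := by
    intro a b c
    by_cases habc : a < b ∧ b < c
    · rw [if_pos habc, w3_apply_u hij hjk habc.1 habc.2]
      split_ifs with h
      · obtain ⟨rfl, rfl, rfl⟩ := h
        exact one_smul ℝ _
      · exact zero_smul ℝ _
    · rw [if_neg habc, if_neg]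
      rintro ⟨rfl, rfl, rfl⟩; exact habc ⟨hij, hjk⟩
  simp [σ3, term, ite_and, Finset.sum_ite_eq']

theorem Matrix.exists_sq_mulVec_eq_smul_iff {K n : Type*} [Field K] [Fintype n] [DecidableEq n]
    {M : Matrix n n K} {v w : n → K} {x y : K} (hv : M *ᵥ v = x • v) (hw : M *ᵥ w = y • w)
    (hv0 : v ≠ 0) (hw0 : w ≠ 0) :
    (∃ lam : K, M ^ 2 *ᵥ v = lam • v ∧ M ^ 2 *ᵥ w = lam • w) ↔ x ^ 2 = y ^ 2 := by
  have sq_mulVec : ∀ {z : K} {t : n → K}, M *ᵥ t = z • t → M ^ 2 *ᵥ t = z ^ 2 • t := by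
    intro z t h
    rw [pow_two, ← mulVec_mulVec, h, mulVec_smul, h, smul_smul, sq]
  rw [sq_mulVec hv, sq_mulVec hw]
  constructor
  · rintro ⟨lam, hx, hy⟩
    rw [smul_left_injective K hv0 hx, smul_left_injective K hw0 hy]
  · intro h
    exact ⟨x ^ 2, rfl, by rw [h]⟩

namespace SU3

def P : Lam3 := w3 0 1 6 + w3 2 3 6 + w3 4 5 6

def Q : Lam3 := -w3 0 2 4 + w3 0 3 5 + w3 1 2 5 + w3 1 3 4

lemma smul_φf_add_smul_T0 (α β : ℝ) : α • φf + β • T0 = (α + 4 * β) • P + (3 * β - α) • Q := by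
  simp only [φf, T0, P, Q]
  module

lemma σ3_P : σ3 P = e 0 * e 1 * e 6 + e 2 * e 3 * e 6 + e 4 * e 5 * e 6 := by
  simp only [P, σ3_add, σ3_w3, Fin.reduceLT]

lemma σ3_Q : σ3 Q = -(e 0 * e 2 * e 4) + e 0 * e 3 * e 5 + e 1 * e 2 * e 5 + e 1 * e 3 * e 4 := by
  simp only [Q, σ3_add, σ3_neg, σ3_w3, Fin.reduceLT]

lemma σ3_mulVec_ψ_zero (a b : ℝ) : σ3 (a • P + b • Q) *ᵥ ψ 0 = (-3 * a + 4 * b) • ψ 0 := by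
  simp only [σ3_add, σ3_smul, σ3_P, σ3_Q, add_mulVec, smul_mulVec, neg_mulVec, ← mulVec_mulVec]
  simp only [e, Fin.isValue, cons_val_zero, cons_val_one, cons_val, add_mulVec, sub_mulVec,
    neg_mulVec, EE_mulVec, ψ_apply, ↓reduceIte, Fin.reduceEq, one_ne_zero, zero_ne_one, one_smul,
    zero_smul, sub_zero, zero_sub, sub_self, add_zero, zero_add, neg_zero, neg_neg,
    mulVec_neg, smul_add, smul_neg, neg_mul]
  module

lemma σ3_mulVec_ψ_one (a b : ℝ) : σ3 (a • P + b • Q) *ᵥ ψ 1 = (-3 * a - 4 * b) • ψ 1 := by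
  simp only [σ3_add, σ3_smul, σ3_P, σ3_Q, add_mulVec, smul_mulVec, neg_mulVec, ← mulVec_mulVec]
  simp only [e, Fin.isValue, cons_val_zero, cons_val_one, cons_val, add_mulVec, sub_mulVec,
    neg_mulVec, EE_mulVec, ψ_apply, ↓reduceIte, Fin.reduceEq, one_ne_zero, zero_ne_one, one_smul,
    zero_smul, sub_zero, zero_sub, sub_self, add_zero, zero_add, neg_zero, neg_neg, sub_neg_eq_add,
    mulVec_neg, smul_add, smul_neg, neg_mul]
  module

lemma exists_eq_smul_P_iff (a b : ℝ) : (∃ r : ℝ, a • P + b • Q = r • P) ↔ b = 0 := by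
  constructor
  · rintro ⟨r, h⟩
    simpa [P, Q, w3_apply_u] using congrArg (fun F : Lam3 => F ![u 0, u 2, u 4]) h
  · rintro rfl
    exact ⟨a, by rw [zero_smul, add_zero]⟩

lemma exists_eq_smul_Q_iff (a b : ℝ) : (∃ r : ℝ, a • P + b • Q = r • Q) ↔ a = 0 := by
  constructor
  · rintro ⟨r, h⟩
    simpa [P, Q, w3_apply_u] using congrArg (fun F : Lam3 => F ![u 0, u 1, u 6]) h
  · rintro rfl
    exact ⟨b, by rw [zero_smul, zero_add]⟩

lemma sq_eigenvalues_eq_iff (a b : ℝ) :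
    (-3 * a + 4 * b) ^ 2 = (-3 * a - 4 * b) ^ 2 ↔ a = 0 ∨ b = 0 := by
  rw [← mul_eq_zero]
  constructor
  · intro h
    linear_combination (-1 / 48 : ℝ) * h
  · intro h
    linear_combination (-48 : ℝ) * h

end SU3

/-- for T = αφ + βT₀, σ(T)² acts as a scalar on span{ψ₁,ψ₂} iff T lies on one
of the two lines ℝ(e₁₂₇+e₃₄₇+e₅₆₇) ∪ ℝ(−e₁₃₅+e₁₄₆+e₂₃₆+e₂₄₅), iff α = 3β or α = −4β. -/
theorem stmt_5 (α β : ℝ) :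
    ((∃ lam : ℝ,
        (σ3 (α • φf + β • T0)) ^ 2 *ᵥ ψ 0 = lam • ψ 0 ∧
        (σ3 (α • φf + β • T0)) ^ 2 *ᵥ ψ 1 = lam • ψ 1)
      ↔ ((∃ r : ℝ, α • φf + β • T0 = r • (w3 0 1 6 + w3 2 3 6 + w3 4 5 6)) ∨
         (∃ r : ℝ, α • φf + β • T0 = r • (-w3 0 2 4 + w3 0 3 5 + w3 1 2 5 + w3 1 3 4)))) ∧
    ((∃ lam : ℝ,
        (σ3 (α • φf + β • T0)) ^ 2 *ᵥ ψ 0 = lam • ψ 0 ∧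
        (σ3 (α • φf + β • T0)) ^ 2 *ᵥ ψ 1 = lam • ψ 1)
      ↔ (α = 3 * β ∨ α = -4 * β)) := by
  change ((∃ lam : ℝ, _) ↔ ((∃ r : ℝ, _ = r • SU3.P) ∨ (∃ r : ℝ, _ = r • SU3.Q))) ∧ _
  rw [SU3.smul_φf_add_smul_T0, SU3.exists_eq_smul_P_iff, SU3.exists_eq_smul_Q_iff,
    Matrix.exists_sq_mulVec_eq_smul_iff (SU3.σ3_mulVec_ψ_zero _ _) (SU3.σ3_mulVec_ψ_one _ _)
      (ψ_ne_zero 0) (ψ_ne_zero 1), SU3.sq_eigenvalues_eq_iff]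
  have hP : α + 4 * β = 0 ↔ α = -4 * β := by constructor <;> intro h <;> linarith
  have hQ : 3 * β - α = 0 ↔ α = 3 * β := by constructor <;> intro h <;> linarith
  rw [hP, hQ]
  exact ⟨or_comm, or_comm⟩
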